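/- arXiv:2312.17566 — 8 statements merged into one kernel-verified Lean document; each statement's English description precedes it below -/
import Mathlib

section
/- Let (Θ, Σ) be a measurable space with a measure Π, f : Θ → [0,∞] measurable, and for measurable ω ⊆ Θ define PO(ω) = (∫⁻_{Θ\ω} f dΠ)/(∫⁻_{ω} f dΠ) in the extended nonnegative reals. Let Ω be a family of measurable subsets of Θ and τ ∈ [0,∞]. Define the local Bayesian test ψ(ω) ↔ PO(ω) ≥ τ and the closed-testing function φ(ω) ↔ (for every ω' ∈ Ω with ω' ⊆ ω, ψ(ω') holds). Then for every ω ∈ Ω, φ(ω) holds if and only if ψ(ω) holds; i.e., the Bayesian posterior-odds test is a shortcut closed testing procedure. -/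
open MeasureTheory
open scoped ENNReal

/-- The Bayesian posterior-odds test is a shortcut closed testing procedure:
for every null `ω` in a family `Ω` of measurable null hypotheses, the closed-testing
function `φ(ω)` (all local tests of nested nulls in `Ω` reject) holds if and only if
the local test `ψ(ω) ↔ PO(ω) ≥ τ` rejects, where
`PO(ω) = (∫⁻ θ in ωᶜ, f θ ∂Π) / (∫⁻ θ in ω, f θ ∂Π)`. -/
theorem bayes_test_is_shortcut_ctp
    {Θ : Type*} [MeasurableSpace Θ] (Pi : Measure Θ) (f : Θ → ℝ≥0∞)
    (hf : Measurable f) (Ω : Set (Set Θ)) (hΩ : ∀ ω ∈ Ω, MeasurableSet ω)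
    (τ : ℝ≥0∞) :
    ∀ ω ∈ Ω,
      ((∀ ω' ∈ Ω, ω' ⊆ ω →
          τ ≤ (∫⁻ θ in ω'ᶜ, f θ ∂Pi) / (∫⁻ θ in ω', f θ ∂Pi)) ↔
        τ ≤ (∫⁻ θ in ωᶜ, f θ ∂Pi) / (∫⁻ θ in ω, f θ ∂Pi)) := by
  intro ω hω
  constructor
  · intro h
    exact h ω hω subset_rfl
  · intro h ω' hω' hsub
    refine h.trans (ENNReal.div_le_div ?_ ?_)
    · exact lintegral_mono_set (Set.compl_subset_compl.mpr hsub)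
    · exact lintegral_mono_set hsub
end

section
/- Let I be a finite index set, Θ a set, ω : I → Set Θ a family of null hypothesis sets, Y a measurable space, P a probability measure on Y, and ψ : I → Y → Prop a family of local tests such that {y | ψ r y} is measurable for every r ∈ I. Define the closed testing procedure φ s y ↔ (for all r ∈ I with ω r ⊆ ω s, ψ r y). Fix θ ∈ Θ and suppose s̃ ∈ I indexes the intersection of all true nulls, in the sense that θ ∈ ω s̃ and for every s ∈ I with θ ∈ ω s one has ω s̃ ⊆ ω s. Then the familywise error probability satisfies P{y | ∃ s ∈ I, θ ∈ ω s ∧ φ s y} ≤ P{y | ψ s̃ y}; i.e., the closed testing procedure controls the familywise error rate at the level of the local test of the intersection of all true null hypotheses. -/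
open MeasureTheory

/-- A closed testing procedure controls the familywise error rate at the level of the
local test of the intersection of all true null hypotheses: if `s̃` indexes the
intersection of all true nulls at the parameter `θ`, then the probability of any
familywise error is at most the probability that the local test `ψ s̃` rejects. -/
theorem ctp_controls_fwer
    {I : Type*} [Fintype I] {Θ : Type*} (ω : I → Set Θ)
    {Y : Type*} [MeasurableSpace Y] (P : Measure Y) [IsProbabilityMeasure P]
    (ψ : I → Y → Prop) (hψ : ∀ r : I, MeasurableSet {y | ψ r y})
    (θ : Θ) (stilde : I) (htrue : θ ∈ ω stilde)
    (hinter : ∀ s : I, θ ∈ ω s → ω stilde ⊆ ω s) :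
    P {y | ∃ s : I, θ ∈ ω s ∧ ∀ r : I, ω r ⊆ ω s → ψ r y} ≤ P {y | ψ stilde y} := by
  apply measure_mono
  rintro y ⟨s, hs, h⟩
  exact h stilde (hinter s hs)
end

section
/- Let ν ∈ ℕ and let models be indexed by s : Fin ν → Bool. For a null-hypothesis index v : Fin ν → Bool define O_v = {s | ∀ j, v j = false → s j = false} (models compatible with the null) and A_v = {s | ¬ (s ∈ O_v)}. Let v⁻ : Fin ν → Bool encode a sub-analysis that excludes the variables {j | v⁻ j = false}, set S⁻ = O_{v⁻}, and let v ⊓ v⁻ denote the pointwise Boolean conjunction. Then: (i) O_v ∩ S⁻ = O_{v ⊓ v⁻}; (ii) A_v ∩ S⁻ ⊆ A_{v ⊓ v⁻}; and consequently (iii) for every function PO : (Fin ν → Bool) → [0,∞], the sub-analysis posterior odds satisfy (∑_{s ∈ A_v ∩ S⁻} PO s) / (∑_{s ∈ O_v ∩ S⁻} PO s) ≤ (∑_{s ∈ A_{v ⊓ v⁻}} PO s) / (∑_{s ∈ O_{v ⊓ v⁻}} PO s), with division taken in the extended nonnegative reals. Thus rejection of ω_v in a sub-analysis implies rejection of the intersection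 null ω_{v ⊓ v⁻} in the full analysis. -/
open scoped ENNReal

/-- The set of models (indexed by `s : Fin ν → Bool`) compatible with the null
hypothesis indexed by `v`, namely those with `s j = false` whenever `v j = false`. -/
def nullModels {ν : ℕ} (v : Fin ν → Bool) : Set (Fin ν → Bool) :=
  {s | ∀ j, v j = false → s j = false}

theorem nullModels_inter {ν : ℕ} (v w : Fin ν → Bool) :
    nullModels v ∩ nullModels w = nullModels (fun j => v j && w j) := by
  ext s
  simp only [nullModels, Set.mem_inter_iff, Set.mem_ofPred_eq, Bool.and_eq_false_iff]
  exact ⟨fun ⟨hv, hw⟩ j hj => hj.elim (hv j) (hw j),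
    fun h => ⟨fun j hj => h j (.inl hj), fun j hj => h j (.inr hj)⟩⟩

theorem compl_inter_subset_compl_inter {α : Type*} (A B : Set α) : Aᶜ ∩ B ⊆ (A ∩ B)ᶜ :=
  fun _ hs hAB => hs.1 hAB.1

/-- Testing based on a sub-analysis: excluding the variables `{j | v⁻ j = false}`
(i.e. restricting the model space to `S⁻ = O_{v⁻}`), one has
(i) `O_v ∩ S⁻ = O_{v ⊓ v⁻}`, (ii) `A_v ∩ S⁻ ⊆ A_{v ⊓ v⁻}`, and hence
(iii) the sub-analysis model-averaged posterior odds against `ω_v` are a lower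
bound on the full-analysis posterior odds against the intersection null `ω_{v ⊓ v⁻}`. -/
theorem subanalysis_testing
    {ν : ℕ} (v vminus : Fin ν → Bool) (PO : (Fin ν → Bool) → ℝ≥0∞) :
    (nullModels v ∩ nullModels vminus = nullModels (fun j => v j && vminus j)) ∧
    ((nullModels v)ᶜ ∩ nullModels vminus ⊆ (nullModels (fun j => v j && vminus j))ᶜ) ∧
    (∑' s : ((nullModels v)ᶜ ∩ nullModels vminus : Set (Fin ν → Bool)), PO s) /
        (∑' s : (nullModels v ∩ nullModels vminus : Set (Fin ν → Bool)), PO s) ≤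
      (∑' s : ((nullModels (fun j => v j && vminus j))ᶜ : Set (Fin ν → Bool)), PO s) /
        (∑' s : (nullModels (fun j => v j && vminus j) : Set (Fin ν → Bool)), PO s) := by
  have h_null := nullModels_inter v vminus
  have h_alt : (nullModels v)ᶜ ∩ nullModels vminus ⊆ (nullModels (fun j => v j && vminus j))ᶜ :=
    h_null ▸ compl_inter_subset_compl_inter _ _
  refine ⟨h_null, h_alt, ?_⟩
  rw [h_null]
  exact ENNReal.div_le_div_right (ENNReal.tsum_mono_subtype PO h_alt) _
end

section
/- Let γ be the standard Gaussian measure on ℝ and define G(x) = γ{z : z² ≥ 2·log x} (the upper tail of the chi-squared distribution with one degree of freedom evaluated at 2 log x). Then G is regularly varying at infinity with index 1: for every c > 0, the ratio G(c·x)/G(x) tends to 1/c as x → ∞. -/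
/-!
Mills' ratio: for a standard Gaussian `Z` with density `φ`, integrating `(-φ)' = z φ` and
`(-φ(z)/z)' = (1 + z⁻²) φ(z)` over `(t, ∞)` gives
`t P(Z ≥ t) ≤ φ(t) ≤ (t + t⁻¹) P(Z ≥ t)`, so `P(Z ≥ t) ~ φ(t)/t`.
By symmetry `G(x) = 2 P(Z ≥ √(2 log x))`, and `φ(√(2 log x)) = x⁻¹/√(2π)`, hence
`G(x) ~ 1/(x √(π log x))`. Since `log (c x) ~ log x`, the ratio `G(c x)/G(x)` tends to `1/c`.
-/

open MeasureTheory ProbabilityTheory Filter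

open Set Asymptotics Real Topology

local notation "φ" => gaussianPDFReal 0 1

lemma gaussianPDFReal_zero_one : φ = fun z => (√(2 * π))⁻¹ * exp (-z ^ 2 / 2) := by
  ext z; simp [gaussianPDFReal]

lemma hasDerivAt_gaussianPDFReal_zero_one (z : ℝ) : HasDerivAt φ (-(z * φ z)) z := by
  rw [gaussianPDFReal_zero_one]
  refine ((((hasDerivAt_pow 2 z).neg.div_const 2).exp).const_mul (√(2 * π))⁻¹).congr_deriv ?_
  simp only [Pi.neg_apply]
  push_cast
  ring

lemma tendsto_gaussianPDFReal_zero_one_atTop : Tendsto φ atTop (𝓝 0) := by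
  have h : Tendsto (fun z : ℝ => -z ^ 2 / 2) atTop atBot :=
    (tendsto_neg_atTop_atBot.comp (tendsto_pow_atTop two_ne_zero)).atBot_div_const two_pos
  rw [gaussianPDFReal_zero_one]
  simpa using (tendsto_exp_atBot.comp h).const_mul (√(2 * π))⁻¹

lemma mul_integral_Ioi_gaussianPDFReal_le {t : ℝ} (ht : 0 ≤ t) :
    t * ∫ z in Ioi t, φ z ≤ φ t := by
  have hderiv : ∀ z ∈ Ici t, HasDerivAt (fun z => -φ z) (z * φ z) z := fun z _ =>
    (hasDerivAt_gaussianPDFReal_zero_one z).neg.congr_deriv (neg_neg _)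
  have hnonneg : ∀ z ∈ Ioi t, 0 ≤ z * φ z := fun z hz =>
    mul_nonneg (ht.trans hz.out.le) (gaussianPDFReal_nonneg 0 1 z)
  have hlim : Tendsto (fun z => -φ z) atTop (𝓝 0) := by
    simpa using tendsto_gaussianPDFReal_zero_one_atTop.neg
  calc t * ∫ z in Ioi t, φ z = ∫ z in Ioi t, t * φ z := (integral_const_mul t _).symm
    _ ≤ ∫ z in Ioi t, z * φ z := by
      refine integral_mono_of_nonneg ?_ (integrableOn_Ioi_deriv_of_nonneg' hderiv hnonneg hlim) ?_
      · exact ae_of_all _ fun z => mul_nonneg ht (gaussianPDFReal_nonneg 0 1 z)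
      · filter_upwards [ae_restrict_mem measurableSet_Ioi] with z hz
        exact mul_le_mul_of_nonneg_right hz.out.le (gaussianPDFReal_nonneg 0 1 z)
    _ = φ t := by rw [integral_Ioi_of_hasDerivAt_of_nonneg' hderiv hnonneg hlim]; ring

lemma div_le_mul_integral_Ioi_gaussianPDFReal {t : ℝ} (ht : 0 < t) :
    φ t / t ≤ (1 + (t ^ 2)⁻¹) * ∫ z in Ioi t, φ z := by
  have hderiv :
      ∀ z ∈ Ici t, HasDerivAt (fun z => -(φ z / z)) ((1 + (z ^ 2)⁻¹) * φ z) z := by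
    intro z hz
    have hz : z ≠ 0 := (ht.trans_le hz).ne'
    refine ((hasDerivAt_gaussianPDFReal_zero_one z).div (hasDerivAt_id' z) hz).neg.congr_deriv ?_
    field_simp
    ring
  have hnonneg : ∀ z ∈ Ioi t, 0 ≤ (1 + (z ^ 2)⁻¹) * φ z := fun z _ =>
    mul_nonneg (by positivity) (gaussianPDFReal_nonneg 0 1 z)
  have hlim : Tendsto (fun z => -(φ z / z)) atTop (𝓝 0) := by
    simpa [div_eq_mul_inv] using
      (tendsto_gaussianPDFReal_zero_one_atTop.mul tendsto_inv_atTop_zero).neg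
  calc φ t / t = ∫ z in Ioi t, (1 + (z ^ 2)⁻¹) * φ z := by
        rw [integral_Ioi_of_hasDerivAt_of_nonneg' hderiv hnonneg hlim]; ring
    _ ≤ ∫ z in Ioi t, (1 + (t ^ 2)⁻¹) * φ z := by
      refine setIntegral_mono_on (integrableOn_Ioi_deriv_of_nonneg' hderiv hnonneg hlim)
        ((integrable_gaussianPDFReal 0 1).integrableOn.const_mul _) measurableSet_Ioi fun z hz => ?_
      gcongr
      · exact gaussianPDFReal_nonneg 0 1 z
      · exact hz.out.le
    _ = (1 + (t ^ 2)⁻¹) * ∫ z in Ioi t, φ z := integral_const_mul _ _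

lemma gaussianReal_Ici_toReal (t : ℝ) :
    (gaussianReal 0 1 (Ici t)).toReal = ∫ z in Ioi t, φ z := by
  rw [gaussianReal_apply_eq_integral 0 one_ne_zero, integral_Ici_eq_integral_Ioi,
    ENNReal.toReal_ofReal
      (setIntegral_nonneg measurableSet_Ioi fun z _ => gaussianPDFReal_nonneg 0 1 z)]

theorem isEquivalent_gaussianReal_Ici :
    (fun t => (gaussianReal 0 1 (Ici t)).toReal) ~[atTop] fun t => φ t / t := by
  refine isEquivalent_of_tendsto_one ?_
  have hlower : Tendsto (fun t : ℝ => (1 + (t ^ 2)⁻¹)⁻¹) atTop (𝓝 1) := by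
    simpa using ((tendsto_inv_atTop_zero.comp
      (tendsto_pow_atTop (α := ℝ) two_ne_zero)).const_add 1).inv₀ (by norm_num)
  refine tendsto_of_tendsto_of_tendsto_of_le_of_le' hlower tendsto_const_nhds ?_ ?_
  all_goals
    filter_upwards [eventually_gt_atTop 0] with t ht
    have hφt : 0 < φ t / t := div_pos (gaussianPDFReal_pos 0 1 t one_ne_zero) ht
    simp only [Pi.div_apply, gaussianReal_Ici_toReal]
  · rw [le_div_iff₀ hφt, inv_mul_le_iff₀ (by positivity)]
    exact div_le_mul_integral_Ioi_gaussianPDFReal ht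
  · rw [div_le_one hφt, le_div_iff₀ ht, mul_comm]
    exact mul_integral_Ioi_gaussianPDFReal_le ht.le

lemma gaussianReal_setOf_le_sq {v : NNReal} {a : ℝ} (ha : 0 < a) :
    gaussianReal 0 v {z | a ≤ z ^ 2} = 2 * gaussianReal 0 v (Ici √a) := by
  have hsa : 0 < √a := sqrt_pos.mpr ha
  have hset : {z : ℝ | a ≤ z ^ 2} = Iic (-√a) ∪ Ici √a := by
    ext z
    simp only [mem_ofPred_eq, mem_union, mem_Iic, mem_Ici, ← sqrt_le_sqrt_iff (sq_nonneg z),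
      sqrt_sq_eq_abs, le_abs']
  have hsymm : gaussianReal 0 v (Iic (-√a)) = gaussianReal 0 v (Ici √a) := by
    conv_rhs =>
      rw [← neg_zero, ← gaussianReal_map_neg,
        Measure.map_apply measurable_neg measurableSet_Ici]
    simp
  rw [hset, measure_union (Iic_disjoint_Ici.mpr (by linarith)) measurableSet_Ici, hsymm, two_mul]

lemma gaussianPDFReal_sqrt_two_mul_log {x : ℝ} (hx : 1 ≤ x) :
    φ √(2 * log x) = (√(2 * π))⁻¹ * x⁻¹ := by
  rw [gaussianPDFReal_zero_one]
  dsimp only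
  rw [sq_sqrt (by have := log_nonneg hx; positivity),
    neg_div, mul_div_cancel_left₀ _ two_ne_zero, exp_neg, exp_log (by linarith)]

lemma tendsto_log_mul_div_log {c : ℝ} (hc : c ≠ 0) :
    Tendsto (fun x => log (c * x) / log x) atTop (𝓝 1) := by
  have h := (tendsto_const_nhds (x := log c)).div_atTop tendsto_log_atTop |>.const_add 1
  rw [add_zero] at h
  refine h.congr' ?_
  filter_upwards [eventually_gt_atTop 1] with x hx
  rw [log_mul hc (by linarith), add_div, div_self (log_pos hx).ne', add_comm]

theorem isEquivalent_gaussianReal_setOf_two_mul_log_le_sq :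
    (fun x => (gaussianReal 0 1 {z | 2 * log x ≤ z ^ 2}).toReal) ~[atTop]
      fun x => (x * √(π * log x))⁻¹ := by
  have hs : Tendsto (fun x => √(2 * log x)) atTop atTop :=
    tendsto_sqrt_atTop.comp (tendsto_log_atTop.const_mul_atTop two_pos)
  have h := (IsEquivalent.refl (u := fun _ : ℝ => (2 : ℝ))).mul
    (isEquivalent_gaussianReal_Ici.comp_tendsto hs)
  refine (h.congr_left ?_).congr_right ?_
  all_goals
    filter_upwards [eventually_gt_atTop 1] with x hx
    have hlog := log_pos hx
    simp only [Pi.mul_apply, Function.comp_apply]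
  · rw [gaussianReal_setOf_le_sq (by positivity), ENNReal.toReal_mul]
    norm_num
  · rw [gaussianPDFReal_sqrt_two_mul_log hx.le, sqrt_mul two_pos.le, sqrt_mul two_pos.le,
      sqrt_mul pi_pos.le]
    field_simp
    rw [sq_sqrt two_pos.le]

/-- The chi-squared(1) tail evaluated at `2 log x`, i.e.
`G(x) = γ{z : z² ≥ 2 log x}` for `γ` the standard Gaussian measure,
is regularly varying at infinity with index 1: for every `c > 0`,
`G(c·x)/G(x) → 1/c` as `x → ∞`. -/
theorem chiSq_tail_regularly_varying (c : ℝ) (hc : 0 < c) :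
    Tendsto
      (fun x : ℝ =>
        ((gaussianReal 0 1) {z : ℝ | 2 * Real.log (c * x) ≤ z ^ 2}).toReal /
          ((gaussianReal 0 1) {z : ℝ | 2 * Real.log x ≤ z ^ 2}).toReal)
      atTop (nhds (1 / c)) := by
  have hG := isEquivalent_gaussianReal_setOf_two_mul_log_le_sq
  have hcx : Tendsto (fun x => c * x) atTop atTop := tendsto_id.const_mul_atTop hc
  refine ((hG.comp_tendsto hcx).div hG).tendsto_nhds_iff.mpr ?_
  have h := ((tendsto_log_mul_div_log hc.ne').sqrt.const_mul c).inv₀ (by positivity)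
  rw [sqrt_one, mul_one, ← one_div] at h
  refine h.congr' ?_
  filter_upwards [eventually_gt_atTop 1, hcx.eventually_gt_atTop 1] with x hx hcx
  have hlogx := log_pos hx
  have hlogcx := log_pos hcx
  simp only [Pi.div_apply, Function.comp_apply, sqrt_div hlogcx.le, sqrt_mul pi_pos.le]
  field_simp
end

section
/- Let c ∈ (−1, 1), let P be the product of two copies of the standard Gaussian measure on ℝ (the law of independent standard normals Z₁, Z₂), and set U = Z₁ and V = c·Z₁ + √(1−c²)·Z₂, so that (U, V) is bivariate normal with standard margins and correlation c. Then U and V are asymptotically independent in the upper tail: P(U > t and V > t) / P(U > t) → 0 as t → ∞. -/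
/-!
`U + V = (1 + c) Z₁ + √(1 - c²) Z₂` is a centred Gaussian of variance `2 (1 + c)`, and
`U + V > 2t` on the joint exceedance event, so a Chernoff bound gives
`P(U > t, V > t) ≤ exp (-t² / (1 + c))`. On the other hand `P(U > t)` is at least the mass of
`(t, t + 1]`, hence at least `φ(t + 1) ∝ exp (-(t + 1)² / 2)`. Since `1 / (1 + c) > 1 / 2`, the
quotient tends to `0`.
-/

open MeasureTheory ProbabilityTheory Filter Real NNReal

lemma map_linear_prod_gaussianReal (m₁ m₂ : ℝ) (v₁ v₂ : ℝ≥0) (a b : ℝ) :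
    ((gaussianReal m₁ v₁).prod (gaussianReal m₂ v₂)).map (fun z => a * z.1 + b * z.2) =
      gaussianReal (a * m₁ + b * m₂) (⟨a ^ 2, sq_nonneg a⟩ * v₁ + ⟨b ^ 2, sq_nonneg b⟩ * v₂) := by
  have hcomp : (fun z : ℝ × ℝ => a * z.1 + b * z.2) =
      (fun z => z.1 + z.2) ∘ Prod.map (a * ·) (b * ·) := rfl
  rw [hcomp, ← Measure.map_map (by fun_prop) (by fun_prop),
    ← Measure.map_prod_map _ _ (by fun_prop) (by fun_prop),
    gaussianReal_map_const_mul, gaussianReal_map_const_mul]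
  exact gaussianReal_conv_gaussianReal

lemma gaussianReal_real_Ici_le {v : ℝ≥0} (hv : v ≠ 0) {x : ℝ} (hx : 0 ≤ x) :
    (gaussianReal 0 v).real (Set.Ici x) ≤ exp (-x ^ 2 / (2 * v)) := by
  have hv' : (0 : ℝ) < v := by positivity
  calc (gaussianReal 0 v).real (Set.Ici x)
      ≤ exp (-(x / v) * x) * mgf id (gaussianReal 0 v) (x / v) :=
        measure_ge_le_exp_mul_mgf x (by positivity) (integrable_exp_mul_gaussianReal _)
    _ = exp (-x ^ 2 / (2 * v)) := by
        rw [mgf_id_gaussianReal, ← exp_add]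
        congr 1
        field_simp
        ring

lemma gaussianPDFReal_add_one_le_gaussianReal_real_Ioi {v : ℝ≥0} (hv : v ≠ 0) {t : ℝ}
    (ht : 0 ≤ t) : gaussianPDFReal 0 v (t + 1) ≤ (gaussianReal 0 v).real (Set.Ioi t) := by
  rw [measureReal_def, gaussianReal_apply_eq_integral 0 hv,
    ENNReal.toReal_ofReal (setIntegral_nonneg measurableSet_Ioi fun x _ =>
      gaussianPDFReal_nonneg _ _ _)]
  have hpdf_mono :
      ∀ x ∈ Set.Ioc t (t + 1), gaussianPDFReal 0 v (t + 1) ≤ gaussianPDFReal 0 v x := by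
    rintro x ⟨htx, hx⟩
    simp only [gaussianPDFReal, sub_zero]
    gcongr
    nlinarith
  calc gaussianPDFReal 0 v (t + 1) = ∫ _ in Set.Ioc t (t + 1), gaussianPDFReal 0 v (t + 1) := by
        simp
    _ ≤ ∫ x in Set.Ioc t (t + 1), gaussianPDFReal 0 v x :=
        setIntegral_mono_on (integrableOn_const (by simp))
          (integrable_gaussianPDFReal 0 v).integrableOn measurableSet_Ioc hpdf_mono
    _ ≤ ∫ x in Set.Ioi t, gaussianPDFReal 0 v x :=
        setIntegral_mono_set (integrable_gaussianPDFReal 0 v).integrableOn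
          (Eventually.of_forall fun x => gaussianPDFReal_nonneg _ _ _)
          Set.Ioc_subset_Ioi_self.eventuallyLE

lemma tendsto_exp_neg_mul_sq_div_gaussianPDFReal {a : ℝ} (ha : 1 / 2 < a) :
    Tendsto (fun t => exp (-a * t ^ 2) / gaussianPDFReal 0 1 (t + 1)) atTop (nhds 0) := by
  have hexponent : Tendsto (fun t : ℝ => -(t + 1) ^ 2 / 2 - -a * t ^ 2) atTop atTop := by
    have : (fun t : ℝ => -(t + 1) ^ 2 / 2 - -a * t ^ 2) =
        fun t => t * ((a - 1 / 2) * t - 1) - 1 / 2 := by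
      ext t; ring
    rw [this]
    refine tendsto_atTop_add_const_right _ _ (tendsto_id.atTop_mul_atTop₀ ?_)
    exact tendsto_atTop_add_const_right _ _ (tendsto_id.const_mul_atTop (by linarith))
  have hratio : (fun t => exp (-a * t ^ 2) / gaussianPDFReal 0 1 (t + 1)) =
      fun t => exp (-a * t ^ 2) / exp (-(t + 1) ^ 2 / 2) / (√(2 * π))⁻¹ := by
    ext t; simp only [gaussianPDFReal, sub_zero, NNReal.coe_one, mul_one]; field_simp
  rw [hratio, ← zero_div (√(2 * π))⁻¹]
  exact (isLittleO_exp_comp_exp_comp.mpr hexponent).tendsto_div_nhds_zero.div_const _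

lemma prod_gaussianReal_real_joint_tail_le {c : ℝ} (hc : -1 < c) (hc' : c ≤ 1) {t : ℝ}
    (ht : 0 ≤ t) :
    ((gaussianReal 0 1).prod (gaussianReal 0 1)).real
        {z : ℝ × ℝ | t < z.1 ∧ t < c * z.1 + √(1 - c ^ 2) * z.2} ≤
      exp (-(1 + c)⁻¹ * t ^ 2) := by
  set s := √(1 - c ^ 2)
  have hs : s ^ 2 = 1 - c ^ 2 := sq_sqrt (by nlinarith)
  set W : ℝ × ℝ → ℝ := fun z => (1 + c) * z.1 + s * z.2
  set v : ℝ≥0 := ⟨(1 + c) ^ 2, sq_nonneg _⟩ * 1 + ⟨s ^ 2, sq_nonneg _⟩ * 1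
  have hv : (v : ℝ) = 2 * (1 + c) := by
    change (1 + c) ^ 2 * 1 + s ^ 2 * 1 = _
    rw [hs]; ring
  have hv0 : v ≠ 0 := by rw [← NNReal.coe_ne_zero, hv]; linarith
  -- `W z = z.1 + (c * z.1 + s * z.2)` is `U + V`
  have hsub : {z : ℝ × ℝ | t < z.1 ∧ t < c * z.1 + s * z.2} ⊆ W ⁻¹' Set.Ici (2 * t) := by
    rintro z ⟨h₁, h₂⟩
    simp only [W, Set.mem_preimage, Set.mem_Ici]
    linarith
  calc _ ≤ ((gaussianReal 0 1).prod (gaussianReal 0 1)).real (W ⁻¹' Set.Ici (2 * t)) :=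
        measureReal_mono hsub
    _ = (gaussianReal 0 v).real (Set.Ici (2 * t)) := by
        rw [← map_measureReal_apply (by fun_prop) measurableSet_Ici,
          map_linear_prod_gaussianReal]
        simp only [mul_zero, add_zero, v]
    _ ≤ exp (-(2 * t) ^ 2 / (2 * v)) := gaussianReal_real_Ici_le hv0 (by positivity)
    _ = exp (-(1 + c)⁻¹ * t ^ 2) := by
        rw [hv]
        field_simp

/-- Davis–Resnick asymptotic independence in the upper tail for a bivariate normal
pair with correlation `|c| < 1`: with `Z₁, Z₂` independent standard normals,
`U = Z₁` and `V = c·Z₁ + √(1−c²)·Z₂`,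
`P(U > t and V > t) / P(U > t) → 0` as `t → ∞`. -/
theorem bivariate_normal_asymptotic_independence (c : ℝ) (hc : -1 < c) (hc' : c < 1) :
    Tendsto
      (fun t : ℝ =>
        (((gaussianReal 0 1).prod (gaussianReal 0 1))
            {z : ℝ × ℝ | t < z.1 ∧ t < c * z.1 + Real.sqrt (1 - c ^ 2) * z.2}).toReal /
          (((gaussianReal 0 1).prod (gaussianReal 0 1)) {z : ℝ × ℝ | t < z.1}).toReal)
      atTop (nhds 0) := by
  have hrate : 1 / 2 < (1 + c)⁻¹ := by
    rw [one_div]; exact inv_strictAnti₀ (by linarith) (by linarith)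
  refine tendsto_of_tendsto_of_tendsto_of_le_of_le' tendsto_const_nhds
    (tendsto_exp_neg_mul_sq_div_gaussianPDFReal hrate)
    (Eventually.of_forall fun t => by positivity) ?_
  filter_upwards [eventually_ge_atTop 0] with t ht
  have hmarginal : {z : ℝ × ℝ | t < z.1} = Set.Ioi t ×ˢ Set.univ := by ext; simp
  have hdenom : gaussianPDFReal 0 1 (t + 1) ≤
      ((gaussianReal 0 1).prod (gaussianReal 0 1)).real {z : ℝ × ℝ | t < z.1} := by
    rw [hmarginal, measureReal_prod_prod, probReal_univ, mul_one]
    exact gaussianPDFReal_add_one_le_gaussianReal_real_Ioi one_ne_zero ht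
  exact div_le_div₀ (by positivity) (prod_gaussianReal_real_joint_tail_le hc hc'.le ht)
    (gaussianPDFReal_pos _ _ _ one_ne_zero) hdenom
end

section
/- Fix μ > 0, ξ ∈ (0, 1), ρ ∈ (−1, 1) and τ > 0 with τ ≥ μ·√ξ. Set c = μ·√ξ, w* = √((2/(1−ξ))·log(τ/c)) and z* = |ρ|·w*/√(1−ρ²). Define PO(w, z) = c·exp((1−ξ)·w²/2) · (1 + c⁻¹·exp(−(1−ξ)·(ρ·w − √(1−ρ²)·z)²/2)) / (1 + c⁻¹·exp(−(1−ξ)·z²/2)) and PO⁺(w, z) = c·exp((1−ξ)·w²/2)·ι(z), where ι(z) = 1 + c⁻¹ if z² ≤ (z*)², and ι(z) = 1 + c⁻¹·exp(−((1−ξ)/2)·(|ρ|·w* − |z|·√(1−ρ²))²) if z² > (z*)². Then for all real w and z, PO(w, z) ≥ τ implies PO⁺(w, z) ≥ τ; i.e., the rejection region of PO is contained in that of the dominating statistic PO⁺. -/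
/-- Stochastic dominance of the model-averaged posterior odds by the statistic
`PO⁺` in the simplified two-variable model: with `c = μ√ξ`,
`w* = √((2/(1−ξ))·log(τ/c))` and `z* = |ρ|·w*/√(1−ρ²)`, for all real `w`, `z`,
`PO(w,z) ≥ τ` implies `PO⁺(w,z) ≥ τ`, i.e. the rejection region of the posterior
odds is contained in that of the dominating statistic. -/
theorem twoVar_po_dominated
    (μ ξ ρ τ : ℝ) (hμ : 0 < μ) (hξ0 : 0 < ξ) (hξ1 : ξ < 1)
    (hρ : -1 < ρ) (hρ' : ρ < 1) (hτ0 : 0 < τ) (hτ : μ * Real.sqrt ξ ≤ τ) :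
    ∀ w z : ℝ,
      τ ≤ (μ * Real.sqrt ξ) * Real.exp ((1 - ξ) * w ^ 2 / 2) *
            (1 + (μ * Real.sqrt ξ)⁻¹ *
              Real.exp (-(1 - ξ) * (ρ * w - Real.sqrt (1 - ρ ^ 2) * z) ^ 2 / 2)) /
          (1 + (μ * Real.sqrt ξ)⁻¹ * Real.exp (-(1 - ξ) * z ^ 2 / 2)) →
      τ ≤ (μ * Real.sqrt ξ) * Real.exp ((1 - ξ) * w ^ 2 / 2) *
            (if z ^ 2 ≤ (|ρ| * Real.sqrt (2 / (1 - ξ) * Real.log (τ / (μ * Real.sqrt ξ))) /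
                  Real.sqrt (1 - ρ ^ 2)) ^ 2 then
              1 + (μ * Real.sqrt ξ)⁻¹
            else
              1 + (μ * Real.sqrt ξ)⁻¹ *
                Real.exp (-((1 - ξ) / 2) *
                  (|ρ| * Real.sqrt (2 / (1 - ξ) * Real.log (τ / (μ * Real.sqrt ξ))) -
                    |z| * Real.sqrt (1 - ρ ^ 2)) ^ 2)) := by

  intro w z h
  set c := μ * Real.sqrt ξ with hcdef
  have hc : 0 < c := mul_pos hμ (Real.sqrt_pos.mpr hξ0)
  have ha : (0:ℝ) < 1 - ξ := by linarith
  have hτc : 0 < τ / c := div_pos hτ0 hc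
  have hτc1 : 1 ≤ τ / c := (one_le_div hc).mpr hτ
  have hlog : 0 ≤ Real.log (τ / c) := Real.log_nonneg hτc1
  set W := Real.sqrt (2 / (1 - ξ) * Real.log (τ / c)) with hWdef
  have hW0 : 0 ≤ W := Real.sqrt_nonneg _
  have hW2 : W ^ 2 = 2 / (1 - ξ) * Real.log (τ / c) := Real.sq_sqrt (by positivity)
  have hτW : c * Real.exp ((1 - ξ) * W ^ 2 / 2) = τ := by
    rw [hW2]
    have h1 : (1 - ξ) * (2 / (1 - ξ) * Real.log (τ / c)) / 2 = Real.log (τ / c) := by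
      field_simp
    rw [h1, Real.exp_log hτc]
    field_simp
  set s := Real.sqrt (1 - ρ ^ 2) with hsdef
  have hρ2 : (0:ℝ) < 1 - ρ ^ 2 := by nlinarith
  have hs : 0 < s := Real.sqrt_pos.mpr hρ2
  have hs2 : s ^ 2 = 1 - ρ ^ 2 := Real.sq_sqrt hρ2.le
  have hD : 1 ≤ 1 + c⁻¹ * Real.exp (-(1 - ξ) * z ^ 2 / 2) :=
    le_add_of_nonneg_right (by positivity)
  have hN : τ ≤ c * Real.exp ((1 - ξ) * w ^ 2 / 2) *
      (1 + c⁻¹ * Real.exp (-(1 - ξ) * (ρ * w - s * z) ^ 2 / 2)) :=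
    h.trans (div_le_self (by positivity) hD)
  clear h
  have hι : (1:ℝ) ≤ (if z ^ 2 ≤ (|ρ| * W / s) ^ 2 then 1 + c⁻¹
      else 1 + c⁻¹ * Real.exp (-((1 - ξ) / 2) * (|ρ| * W - |z| * s) ^ 2)) := by
    split_ifs <;> exact le_add_of_nonneg_right (by positivity)
  by_cases hwW : W ^ 2 ≤ w ^ 2
  · have hA : τ ≤ c * Real.exp ((1 - ξ) * w ^ 2 / 2) := by
      rw [← hτW]
      gcongr
    exact hA.trans (le_mul_of_one_le_right (by positivity) hι)
  · push_neg at hwW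
    split_ifs with hz
    · have hE1 : Real.exp (-(1 - ξ) * (ρ * w - s * z) ^ 2 / 2) ≤ 1 := by
        rw [Real.exp_le_one_iff]
        nlinarith [sq_nonneg (ρ * w - s * z)]
      refine hN.trans ?_
      have hle : (1:ℝ) + c⁻¹ * Real.exp (-(1 - ξ) * (ρ * w - s * z) ^ 2 / 2) ≤ 1 + c⁻¹ := by
        have := mul_le_mul_of_nonneg_left hE1 (by positivity : (0:ℝ) ≤ c⁻¹)
        linarith [this.trans_eq (mul_one c⁻¹)]
      exact mul_le_mul_of_nonneg_left hle (by positivity)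
    · push_neg at hz
      have habs : |w| ≤ W := by
        have e1 : |w| = Real.sqrt (w ^ 2) := (Real.sqrt_sq_eq_abs w).symm
        have e2 : W = Real.sqrt (W ^ 2) := (Real.sqrt_sq hW0).symm
        rw [e1, e2]
        exact Real.sqrt_le_sqrt hwW.le
      have h1' : (|ρ| * W) ^ 2 / s ^ 2 < z ^ 2 := by rw [← div_pow]; exact hz
      have h1 : (|ρ| * W) ^ 2 < (|z| * s) ^ 2 := by
        have hd := (div_lt_iff₀ (by positivity : (0:ℝ) < s ^ 2)).mp h1'
        have e : (|z| * s) ^ 2 = z ^ 2 * s ^ 2 := by rw [mul_pow, sq_abs]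
        linarith [e ▸ hd]
      have h2 : |ρ| * W < |z| * s :=
        lt_of_pow_lt_pow_left₀ 2 (by positivity) h1
      have h3 : |z| * s - |ρ| * W ≤ |ρ * w - s * z| := by
        have e0 := abs_sub_abs_le_abs_sub (s * z) (ρ * w)
        rw [abs_sub_comm] at e0
        have e1 : |s * z| = s * |z| := by rw [abs_mul, abs_of_pos hs]
        have e2 : |ρ * w| = |ρ| * |w| := abs_mul ρ w
        have e3 : |ρ| * |w| ≤ |ρ| * W := mul_le_mul_of_nonneg_left habs (abs_nonneg ρ)
        rw [e1, e2] at e0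
        have e4 : s * |z| = |z| * s := mul_comm s |z|
        rw [e4] at e0
        linarith
      have hkey : (|ρ| * W - |z| * s) ^ 2 ≤ (ρ * w - s * z) ^ 2 := by
        have hb : (0:ℝ) ≤ |z| * s - |ρ| * W := by linarith
        have h4 := mul_self_le_mul_self hb h3
        have h5 : |ρ * w - s * z| * |ρ * w - s * z| = (ρ * w - s * z) ^ 2 := by
          rw [abs_mul_abs_self]; ring
        have h6 : (|z| * s - |ρ| * W) * (|z| * s - |ρ| * W) = (|ρ| * W - |z| * s) ^ 2 := by
          ring
        linarith
      have hE : Real.exp (-(1 - ξ) * (ρ * w - s * z) ^ 2 / 2) ≤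
          Real.exp (-((1 - ξ) / 2) * (|ρ| * W - |z| * s) ^ 2) := by
        apply Real.exp_le_exp.mpr
        have h7 := mul_le_mul_of_nonneg_left hkey (by linarith : (0:ℝ) ≤ (1 - ξ) / 2)
        linarith
      refine hN.trans ?_
      gcongr
end

section
/- Let f : ℝ → ℝ be a bounded measurable function that is even (f(−z) = f(z) for all z), nonnegative, and nonincreasing on [0, ∞), and let γ be the standard Gaussian measure on ℝ. Then the function a ↦ ∫ f(z + a) dγ(z) is nonincreasing on [0, ∞); in particular, for any a_min ≥ 0, the supremum of ∫ f(z + a) dγ(z) over a ≥ a_min is attained at a = a_min. -/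
open MeasureTheory ProbabilityTheory Set Real
open scoped ENNReal NNReal

namespace GaussShiftAux

noncomputable def p : ℝ → ℝ := gaussianPDFReal 0 1

lemma p_nonneg (x : ℝ) : 0 ≤ p x := gaussianPDFReal_nonneg 0 1 x

lemma p_meas : Measurable p := measurable_gaussianPDFReal 0 1

lemma p_integrable : Integrable p := integrable_gaussianPDFReal 0 1

lemma p_mono {x y : ℝ} (h : y ^ 2 ≤ x ^ 2) : p x ≤ p y := by
  simp only [p, gaussianPDFReal, NNReal.coe_one, mul_one, sub_zero]
  refine mul_le_mul_of_nonneg_left (Real.exp_le_exp.2 ?_) (by positivity)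
  nlinarith

lemma p_even (x : ℝ) : p (-x) = p x := by
  simp only [p, gaussianPDFReal, sub_zero, neg_sq]

/-- integral against Gaussian is integral against density -/
lemma integral_gauss_eq (g : ℝ → ℝ) :
    ∫ z, g z ∂(gaussianReal 0 1) = ∫ z, g z * p z := by
  rw [gaussianReal_of_var_ne_zero _ one_ne_zero]
  have : (gaussianPDF 0 1) = fun x => ((p x).toNNReal : ℝ≥0∞) := by
    funext x
    simp [gaussianPDF, ENNReal.ofReal, p]
  rw [this, integral_withDensity_eq_integral_smul (p_meas.real_toNNReal) g]
  congr 1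
  funext x
  rw [NNReal.smul_def, smul_eq_mul, Real.coe_toNNReal _ (p_nonneg x), mul_comm]

end GaussShiftAux

open GaussShiftAux

/-- Conclusion of the Expectation–Maximization argument: if `f : ℝ → ℝ` is a
bounded measurable function that is even, nonnegative and nonincreasing on
`[0, ∞)`, then `a ↦ ∫ f(z + a) dγ(z)` (for `γ` the standard Gaussian measure) is
nonincreasing on `[0, ∞)`; in particular, for any `a_min ≥ 0` the supremum of
this integral over `a ≥ a_min` is attained at `a = a_min`. -/
theorem gaussian_shift_integral_antitone
    (f : ℝ → ℝ) (hmeas : Measurable f) (hbdd : ∃ C : ℝ, ∀ z, |f z| ≤ C)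
    (heven : ∀ z, f (-z) = f z) (hnonneg : ∀ z, 0 ≤ f z)
    (hanti : AntitoneOn f (Set.Ici (0 : ℝ))) :
    AntitoneOn (fun a : ℝ => ∫ z, f (z + a) ∂(gaussianReal 0 1)) (Set.Ici (0 : ℝ)) ∧
      ∀ amin : ℝ, 0 ≤ amin →
        IsGreatest ((fun a : ℝ => ∫ z, f (z + a) ∂(gaussianReal 0 1)) '' Set.Ici amin)
          (∫ z, f (z + amin) ∂(gaussianReal 0 1)) := by
  obtain ⟨C, hC⟩ := hbdd
  -- f x ≤ f y whenever |y| ≤ |x|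
  have hmono : ∀ x y : ℝ, |y| ≤ |x| → f x ≤ f y := by
    intro x y h
    have hx : f x = f |x| := by rcases abs_choice x with h' | h' <;> rw [h'] <;> simp [heven]
    have hy : f y = f |y| := by rcases abs_choice y with h' | h' <;> rw [h'] <;> simp [heven]
    rw [hx, hy]
    exact hanti (abs_nonneg y) (abs_nonneg x) h
  -- integrability of shifted-product
  have hint : ∀ c : ℝ, Integrable (fun z => f (z + c) * p z) := by
    intro c
    refine Integrable.mono' (p_integrable.const_mul C) ?_ ?_
    · exact ((hmeas.comp (measurable_id.add_const c)).mul p_meas).aestronglyMeasurable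
    · filter_upwards with z
      rw [Real.norm_eq_abs, abs_mul, abs_of_nonneg (p_nonneg z)]
      exact mul_le_mul_of_nonneg_right (hC _) (p_nonneg z)
  have hanti' : AntitoneOn (fun a : ℝ => ∫ z, f (z + a) ∂(gaussianReal 0 1)) (Set.Ici (0 : ℝ)) := by
    intro a ha b hb hab
    simp only [integral_gauss_eq]
    set m := (a + b) / 2 with hm
    set d := (b - a) / 2 with hd
    have hd0 : 0 ≤ d := by simp [hd]; linarith
    have hmd : d ≤ m := by simp only [hm, hd]; linarith [mem_Ici.mp ha]
    have hm0 : 0 ≤ m := hd0.trans hmd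
    -- change of variables
    have hb_eq : ∫ z, f (z + b) * p z = ∫ w, f (w + m) * p (w - d) := by
      rw [← integral_sub_right_eq_self (fun z => f (z + b) * p z) d]
      congr 1; funext w
      have : w - d + b = w + m := by simp [hm, hd]; ring
      rw [this]
    have ha_eq : ∫ z, f (z + a) * p z = ∫ w, f (w + m) * p (w + d) := by
      rw [← integral_add_right_eq_self (fun z => f (z + a) * p z) d]
      congr 1; funext w
      have : w + d + a = w + m := by simp [hm, hd]; ring
      rw [this]
    rw [hb_eq, ha_eq]
    -- integrability of both transformed integrands
    have hib : Integrable (fun w => f (w + m) * p (w - d)) := by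
      have := (hint b).comp_sub_right d
      simpa [show ∀ w : ℝ, w - d + b = w + m by intro w; simp [hm, hd]; ring] using this
    have hia : Integrable (fun w => f (w + m) * p (w + d)) := by
      have := (hint a).comp_add_right d
      simpa [show ∀ w : ℝ, w + d + a = w + m by intro w; simp [hm, hd]; ring] using this
    rw [← sub_nonneg, ← integral_sub hia hib]
    -- split the integral at 0
    set G : ℝ → ℝ := fun w => f (w + m) * p (w + d) - f (w + m) * p (w - d) with hG
    have hiG : Integrable G := hia.sub hib
    rw [← intervalIntegral.integral_Iic_add_Ioi (hiG.integrableOn) (hiG.integrableOn)]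
    have h1 : ∫ w in Iic (0:ℝ), G w = ∫ w in Ioi (0:ℝ), G (-w) := by
      rw [integral_comp_neg_Ioi 0 G, neg_zero]
    rw [h1, ← integral_add ((hiG.comp_neg).integrableOn) (hiG.integrableOn)]
    refine setIntegral_nonneg measurableSet_Ioi (fun v hv => ?_)
    have hv0 : (0:ℝ) ≤ v := le_of_lt hv
    -- pointwise inequality
    have hkey : G (-v) + G v = (f (v + m) - f (-v + m)) * (p (v + d) - p (v - d)) := by
      simp only [hG]
      have e1 : p (-v + d) = p (v - d) := by rw [← p_even]; ring_nf
      have e2 : p (-v - d) = p (v + d) := by rw [← p_even]; ring_nf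
      rw [e1, e2]; ring
    rw [hkey]
    have hf_le : f (v + m) ≤ f (-v + m) := by
      apply hmono
      have h2 : |v + m| = v + m := abs_of_nonneg (by linarith)
      rw [h2]
      calc |(-v) + m| ≤ |(-v)| + |m| := abs_add_le _ _
        _ = v + m := by rw [abs_neg, abs_of_nonneg hv0, abs_of_nonneg hm0]
    have hp_le : p (v + d) ≤ p (v - d) := p_mono (by nlinarith)
    nlinarith [hf_le, hp_le]
  refine ⟨hanti', fun amin hamin => ?_⟩
  constructor
  · exact ⟨amin, self_mem_Ici, rfl⟩
  · rintro x ⟨a, ha, rfl⟩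
    exact hanti' hamin (hamin.trans ha) ha
end

section
/- Let a ≥ 0 and let f : ℝ → ℝ be a bounded measurable even function satisfying f(z + a) ≤ f(z − a) for all z ≥ 0, and let γ be the standard Gaussian measure on ℝ. Then ∫ z·f(z + a) dγ(z) ≤ 0; equivalently, ∫ z·f(z + a) φ(z) dz = ∫_{0}^{∞} z·φ(z)·(f(z + a) − f(z − a)) dz ≤ 0, where φ is the standard normal density. -/
open MeasureTheory ProbabilityTheory Real

lemma gaussian_integrable_id : Integrable (fun z : ℝ => z) (gaussianReal 0 1) := by
  rw [gaussianReal_of_var_ne_zero 0 one_ne_zero]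
  rw [integrable_withDensity_iff (measurable_gaussianPDF 0 1)
    (Filter.Eventually.of_forall fun x => ENNReal.ofReal_lt_top)]
  have : ∀ x : ℝ, x * (gaussianPDF 0 1 x).toReal
      = (Real.sqrt (2 * Real.pi))⁻¹ * (x * Real.exp (-(1/2 : ℝ) * x ^ 2)) := by
    intro x
    rw [gaussianPDF, ENNReal.toReal_ofReal (gaussianPDFReal_nonneg 0 1 x), gaussianPDFReal]
    push_cast
    ring_nf
  simp_rw [this]
  apply Integrable.const_mul
  have := integrable_rpow_mul_exp_neg_mul_sq (b := (1/2 : ℝ)) (by norm_num) (s := 1)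
    (by norm_num)
  simpa [Real.rpow_one] using this

lemma gaussian_map_neg :
    Measure.map (fun z : ℝ => -z) (gaussianReal 0 1) = gaussianReal 0 1 := by
  have h := gaussianReal_map_const_mul (μ := 0) (v := 1) (-1)
  have h2 : (fun z : ℝ => (-1 : ℝ) * z) = fun z : ℝ => -z := by funext z; ring
  rw [h2] at h
  rw [h]
  norm_num

/-- Sign computation in the Expectation–Maximization step: if `a ≥ 0` and
`f : ℝ → ℝ` is a bounded measurable even function with `f(z + a) ≤ f(z − a)` for
all `z ≥ 0`, then `∫ z·f(z + a) dγ(z) ≤ 0` for `γ` the standard Gaussian measure. -/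
theorem gaussian_shifted_first_moment_nonpos
    (a : ℝ) (ha : 0 ≤ a) (f : ℝ → ℝ) (hmeas : Measurable f)
    (hbdd : ∃ C : ℝ, ∀ z, |f z| ≤ C) (heven : ∀ z, f (-z) = f z)
    (hdom : ∀ z : ℝ, 0 ≤ z → f (z + a) ≤ f (z - a)) :
    (∫ z, z * f (z + a) ∂(gaussianReal 0 1)) ≤ 0 := by
  set γ := gaussianReal 0 1 with hγ
  obtain ⟨C, hC⟩ := hbdd
  have hC0 : 0 ≤ C := le_trans (abs_nonneg _) (hC 0)
  -- integrability
  have hint : ∀ b : ℝ, Integrable (fun z => z * f (z + b)) γ := by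
    intro b
    apply Integrable.mono' ((gaussian_integrable_id.abs).const_mul C)
    · exact (measurable_id.mul (hmeas.comp (measurable_add_const b))).aestronglyMeasurable
    · refine Filter.Eventually.of_forall fun z => ?_
      rw [Real.norm_eq_abs, abs_mul]
      calc |z| * |f (z + b)| ≤ |z| * C := by
            exact mul_le_mul_of_nonneg_left (hC _) (abs_nonneg z)
        _ = C * |z| := mul_comm _ _
  -- symmetry: ∫ z f(z-a) = -∫ z f(z+a)
  have hsym : (∫ z, z * f (z - a) ∂γ) = -∫ z, z * f (z + a) ∂γ := by
    conv_lhs => rw [hγ, ← gaussian_map_neg]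
    have hmz : AEStronglyMeasurable (fun z : ℝ => z * f (z - a))
        (Measure.map (fun z : ℝ => -z) (gaussianReal 0 1)) :=
      Measurable.aestronglyMeasurable (by measurability)
    rw [integral_map (measurable_neg.aemeasurable) hmz]
    rw [← integral_neg]
    congr 1
    funext z
    have : -z - a = -(z + a) := by ring
    rw [this, heven]
    ring
  -- pointwise nonpositivity of z ↦ z (f(z+a) - f(z-a))
  have hpt : ∀ z : ℝ, z * (f (z + a) - f (z - a)) ≤ 0 := by
    intro z
    rcases le_or_gt 0 z with hz | hz
    · have := hdom z hz
      have h1 : f (z + a) - f (z - a) ≤ 0 := by linarith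
      exact mul_nonpos_of_nonneg_of_nonpos hz h1
    · have hw : 0 ≤ -z := by linarith
      have := hdom (-z) hw
      have e1 : f (z + a) = f (-z - a) := by
        rw [← heven (z + a)]; congr 1; ring
      have e2 : f (z - a) = f (-z + a) := by
        rw [← heven (z - a)]; congr 1; ring
      have h1 : 0 ≤ f (z + a) - f (z - a) := by
        rw [e1, e2]; linarith
      exact mul_nonpos_of_nonpos_of_nonneg hz.le h1
  have hsub : (∫ z, z * (f (z + a) - f (z - a)) ∂γ)
      = (∫ z, z * f (z + a) ∂γ) - ∫ z, z * f (z - a) ∂γ := by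
    simp_rw [mul_sub]
    exact integral_sub (hint a) (by simpa [sub_eq_add_neg] using hint (-a))
  have hle : (∫ z, z * (f (z + a) - f (z - a)) ∂γ) ≤ 0 := integral_nonpos hpt
  rw [hsub, hsym] at hle
  linarith
end
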